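/- arXiv:1609.01249 — 4 statements merged into one kernel-verified Lean document; each statement's English description precedes it below -/
import Mathlib

section
/- If m is an odd positive integer, then for all real x_1,...,x_n, G_{2m}(x) ≥ (Σ_{i=1}^n x_i^{m-1})(Σ_{i=1}^n x_i^{m+1}). -/
/-!
With `g_m(a, b) = ∑_{r ≤ 2m} (-a)^r b^(2m-r)` (`altGeomSum m a b`), one has
`G_{2m}(x) = ∑_{i,j} g_m(x_i, x_j)`. Peeling off the two extreme terms of `g_{m+1}` on either
side gives `2 g_{m+1} = (a² + b²) g_m + (a - b)(a^(2m+1) - b^(2m+1)) ≥ (a² + b²) g_m`, so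
`2^m g_m ≥ (a² + b²)^m ≥ 2^(m-1) (ab)^(m-1) (a² + b²)` by `2|ab| ≤ a² + b²`.
Summing over all pairs `(i, j)` yields the claim, since
`∑_{i,j} (x_i x_j)^(m-1) (x_i² + x_j²) = 2 S_{m-1} S_{m+1}`.
-/

open Finset

noncomputable def altGeomSum {R : Type*} [CommRing R] (m : ℕ) (a b : R) : R :=
  ∑ r ∈ range (2 * m + 1), (-1) ^ r * a ^ r * b ^ (2 * m - r)

lemma two_mul_sum_pow_mul_sum_pow_add_two {R ι : Type*} [CommSemiring R] [Fintype ι] (k : ℕ)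
    (x : ι → R) :
    2 * ((∑ i, x i ^ k) * (∑ i, x i ^ (k + 2)))
      = ∑ i, ∑ j, (x i * x j) ^ k * (x i ^ 2 + x j ^ 2) := by
  simp only [mul_pow, mul_add, sum_add_distrib, sum_mul_sum]
  rw [two_mul]
  congr 1
  · rw [sum_comm]
    exact sum_congr rfl fun i _ => sum_congr rfl fun j _ => by ring
  · exact sum_congr rfl fun i _ => sum_congr rfl fun j _ => by ring

section CommRing

variable {R : Type*} [CommRing R]

@[simp]
lemma altGeomSum_zero (a b : R) : altGeomSum 0 a b = 1 := by
  simp [altGeomSum]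

lemma altGeomSum_succ_eq_sq_right_mul (m : ℕ) (a b : R) :
    altGeomSum (m + 1) a b = b ^ 2 * altGeomSum m a b + a ^ (2 * m + 1) * (a - b) := by
  rw [altGeomSum, altGeomSum, show 2 * (m + 1) + 1 = 2 * m + 1 + 1 + 1 by ring,
    sum_range_succ, sum_range_succ, mul_sum]
  have hlow : ∀ r ∈ range (2 * m + 1),
      (-1) ^ r * a ^ r * b ^ (2 * (m + 1) - r) = b ^ 2 * ((-1) ^ r * a ^ r * b ^ (2 * m - r)) := by
    intro r hr
    rw [show 2 * (m + 1) - r = 2 * m - r + 2 by grind, pow_add]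
    ring
  rw [sum_congr rfl hlow, show 2 * (m + 1) - (2 * m + 1) = 1 by omega,
    show 2 * (m + 1) - (2 * m + 1 + 1) = 0 by omega, Odd.neg_one_pow ⟨m, rfl⟩,
    Even.neg_one_pow ⟨m + 1, by ring⟩]
  ring

lemma altGeomSum_succ_eq_sq_left_mul (m : ℕ) (a b : R) :
    altGeomSum (m + 1) a b = a ^ 2 * altGeomSum m a b + b ^ (2 * m + 1) * (b - a) := by
  rw [altGeomSum, altGeomSum, show 2 * (m + 1) + 1 = 2 * m + 1 + 1 + 1 by ring,
    sum_range_succ', sum_range_succ', mul_sum]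
  have hhigh : ∀ r ∈ range (2 * m + 1),
      (-1) ^ (r + 1 + 1) * a ^ (r + 1 + 1) * b ^ (2 * (m + 1) - (r + 1 + 1))
        = a ^ 2 * ((-1) ^ r * a ^ r * b ^ (2 * m - r)) := by
    intro r _
    rw [show 2 * (m + 1) - (r + 1 + 1) = 2 * m - r by omega]
    ring
  rw [sum_congr rfl hhigh, show 2 * (m + 1) - (0 + 1) = 2 * m + 1 by omega,
    show 2 * (m + 1) - 0 = 2 * m + 1 + 1 by omega]
  ring

lemma two_mul_altGeomSum_succ (m : ℕ) (a b : R) :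
    2 * altGeomSum (m + 1) a b
      = (a ^ 2 + b ^ 2) * altGeomSum m a b + (a - b) * (a ^ (2 * m + 1) - b ^ (2 * m + 1)) := by
  linear_combination altGeomSum_succ_eq_sq_right_mul m a b + altGeomSum_succ_eq_sq_left_mul m a b

lemma sum_neg_one_pow_mul_sum_pow_mul_sum_pow {ι : Type*} [Fintype ι] (m : ℕ) (x : ι → R) :
    ∑ r ∈ range (2 * m + 1), (-1) ^ r * (∑ k, x k ^ r) * (∑ k, x k ^ (2 * m - r))
      = ∑ i, ∑ j, altGeomSum m (x i) (x j) := by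
  have hterm (r : ℕ) : (-1) ^ r * (∑ k, x k ^ r) * (∑ k, x k ^ (2 * m - r))
      = ∑ i, ∑ j, (-1) ^ r * x i ^ r * x j ^ (2 * m - r) := by
    rw [mul_assoc, sum_mul_sum, mul_sum]
    simp only [mul_sum, mul_assoc]
  simp only [hterm, altGeomSum]
  rw [sum_comm]
  exact sum_congr rfl fun i _ => sum_comm

end CommRing

section LinearOrderedCommRing

variable {R : Type*} [CommRing R] [LinearOrder R] [IsStrictOrderedRing R]

lemma Odd.sub_mul_pow_sub_pow_nonneg {n : ℕ} (hn : Odd n) (a b : R) :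
    0 ≤ (a - b) * (a ^ n - b ^ n) := by
  rcases le_total a b with h | h
  · exact mul_nonneg_of_nonpos_of_nonpos (sub_nonpos.2 h) (sub_nonpos.2 (hn.pow_le_pow.2 h))
  · exact mul_nonneg (sub_nonneg.2 h) (sub_nonneg.2 (hn.pow_le_pow.2 h))

lemma sq_add_sq_mul_altGeomSum_le (m : ℕ) (a b : R) :
    (a ^ 2 + b ^ 2) * altGeomSum m a b ≤ 2 * altGeomSum (m + 1) a b := by
  rw [two_mul_altGeomSum_succ]
  exact le_add_of_nonneg_right ((odd_two_mul_add_one m).sub_mul_pow_sub_pow_nonneg a b)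

lemma sq_add_sq_pow_le_two_pow_mul_altGeomSum (m : ℕ) (a b : R) :
    (a ^ 2 + b ^ 2) ^ m ≤ 2 ^ m * altGeomSum m a b := by
  induction m with
  | zero => simp
  | succ m ih =>
    calc (a ^ 2 + b ^ 2) ^ (m + 1) = (a ^ 2 + b ^ 2) * (a ^ 2 + b ^ 2) ^ m := pow_succ' _ _
      _ ≤ (a ^ 2 + b ^ 2) * (2 ^ m * altGeomSum m a b) := by gcongr
      _ = 2 ^ m * ((a ^ 2 + b ^ 2) * altGeomSum m a b) := by ring
      _ ≤ 2 ^ m * (2 * altGeomSum (m + 1) a b) :=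
        mul_le_mul_of_nonneg_left (sq_add_sq_mul_altGeomSum_le m a b) (by positivity)
      _ = 2 ^ (m + 1) * altGeomSum (m + 1) a b := by ring

lemma mul_pow_mul_sq_add_sq_le_two_mul_altGeomSum (m : ℕ) (a b : R) :
    (a * b) ^ m * (a ^ 2 + b ^ 2) ≤ 2 * altGeomSum (m + 1) a b := by
  have hamgm : (2 * (a * b)) ^ m ≤ (a ^ 2 + b ^ 2) ^ m :=
    calc (2 * (a * b)) ^ m ≤ |2 * (a * b)| ^ m := by rw [← abs_pow]; exact le_abs_self _
      _ ≤ (a ^ 2 + b ^ 2) ^ m := by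
        gcongr
        rw [abs_le]
        constructor <;> nlinarith [sq_nonneg (a + b), sq_nonneg (a - b)]
  refine le_of_mul_le_mul_left ?_ (pow_pos (zero_lt_two' R) m)
  calc 2 ^ m * ((a * b) ^ m * (a ^ 2 + b ^ 2)) = (2 * (a * b)) ^ m * (a ^ 2 + b ^ 2) := by ring
    _ ≤ (a ^ 2 + b ^ 2) ^ m * (a ^ 2 + b ^ 2) := by gcongr
    _ = (a ^ 2 + b ^ 2) ^ (m + 1) := (pow_succ _ _).symm
    _ ≤ 2 ^ (m + 1) * altGeomSum (m + 1) a b := sq_add_sq_pow_le_two_pow_mul_altGeomSum _ a b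
    _ = 2 ^ m * (2 * altGeomSum (m + 1) a b) := by ring

end LinearOrderedCommRing

theorem gasparyan_odd_general (m n : ℕ) (hm : 1 ≤ m) (x : Fin n → ℝ) :
    (∑ i, x i ^ (m - 1)) * (∑ i, x i ^ (m + 1)) ≤
      ∑ r ∈ Finset.range (2 * m + 1),
        (-1 : ℝ) ^ r * (∑ k, x k ^ r) * (∑ k, x k ^ (2 * m - r)) := by
  obtain ⟨k, rfl⟩ := Nat.exists_eq_add_of_le' hm
  rw [sum_neg_one_pow_mul_sum_pow_mul_sum_pow, Nat.add_sub_cancel]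
  refine le_of_mul_le_mul_left ?_ (zero_lt_two' ℝ)
  calc 2 * ((∑ i, x i ^ k) * ∑ i, x i ^ (k + 2))
      = ∑ i, ∑ j, (x i * x j) ^ k * (x i ^ 2 + x j ^ 2) := two_mul_sum_pow_mul_sum_pow_add_two k x
    _ ≤ ∑ i, ∑ j, 2 * altGeomSum (k + 1) (x i) (x j) :=
      sum_le_sum fun i _ => sum_le_sum fun j _ =>
        mul_pow_mul_sq_add_sq_le_two_mul_altGeomSum k (x i) (x j)
    _ = 2 * ∑ i, ∑ j, altGeomSum (k + 1) (x i) (x j) := by simp only [mul_sum]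

theorem gasparyan_odd (m n : ℕ) (hm : 1 ≤ m) (hmo : Odd m) (x : Fin n → ℝ) :
    (∑ i, x i ^ (m - 1)) * (∑ i, x i ^ (m + 1)) ≤
      ∑ r ∈ Finset.range (2 * m + 1),
        (-1 : ℝ) ^ r * (∑ k, x k ^ r) * (∑ k, x k ^ (2 * m - r)) :=
  gasparyan_odd_general m n hm x
end

section
/- For m a positive integer and any x ∈ ℝ^n with x ≠ 0, the form G_{2m}(x) is strictly positive. -/
/-!
Expanding the products, `G_{2m}(x) = ∑_{j,k} ∑_{r ≤ 2m} (-x_j)^r x_k^{2m-r}`. Each inner sum is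
the homogeneous geometric sum `h(a, b) = ∑_{r < N} a^r b^{N-1-r}` with `a = -x_j`, `b = x_k` and
odd `N = 2m+1`. Since `h(a, b) (a - b) = a^N - b^N` and odd powers are strictly monotone,
`h(a, b) > 0` whenever `a ≠ b`, while `h(a, a) = N a^{N-1} ≥ 0`. The diagonal terms `j = k` with
`x_j ≠ 0` have `a ≠ b`, so the sum is positive.
-/

open Finset

section GeomSum

variable {R : Type*} [CommRing R] [LinearOrder R] [IsStrictOrderedRing R] {n : ℕ}

theorem Odd.geom_sum₂_pos (hn : Odd n) {x y : R} (hxy : x ≠ y) :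
    0 < ∑ i ∈ range n, x ^ i * y ^ (n - 1 - i) := by
  have hmul := geom_sum₂_mul x y n
  rcases hxy.lt_or_gt with hlt | hgt
  · refine pos_of_mul_neg_left ?_ (sub_nonpos.2 hlt.le)
    rw [hmul, sub_neg]
    exact hn.strictMono_pow hlt
  · refine pos_of_mul_pos_left ?_ (sub_nonneg.2 hgt.le)
    rw [hmul, sub_pos]
    exact hn.strictMono_pow hgt

theorem Odd.geom_sum₂_nonneg (hn : Odd n) (x y : R) :
    0 ≤ ∑ i ∈ range n, x ^ i * y ^ (n - 1 - i) := by
  rcases eq_or_ne x y with rfl | hxy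
  · obtain ⟨k, rfl⟩ := hn
    rw [geom_sum₂_self, Nat.add_sub_cancel]
    exact mul_nonneg (Nat.cast_nonneg _) ((even_two_mul k).pow_nonneg x)
  · exact (hn.geom_sum₂_pos hxy).le

end GeomSum

theorem Finset.sum_range_sum_pow_mul_sum_pow {ι R : Type*} [CommSemiring R] (s : Finset ι)
    (a b : ι → R) (n : ℕ) :
    ∑ i ∈ range n, (∑ j ∈ s, a j ^ i) * (∑ k ∈ s, b k ^ (n - 1 - i)) =
      ∑ j ∈ s, ∑ k ∈ s, ∑ i ∈ range n, a j ^ i * b k ^ (n - 1 - i) := by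
  simp_rw [sum_mul_sum]
  rw [sum_comm]
  exact sum_congr rfl fun _ _ => sum_comm

theorem gasparyan_pos_general (m n : ℕ) (x : Fin n → ℝ) (hx : x ≠ 0) :
    0 < ∑ r ∈ Finset.range (2 * m + 1),
      (-1 : ℝ) ^ r * (∑ k, x k ^ r) * (∑ k, x k ^ (2 * m - r)) := by
  obtain ⟨k₀, hk₀⟩ : ∃ k, x k ≠ 0 := Function.ne_iff.mp hx
  have hodd : Odd (2 * m + 1) := odd_two_mul_add_one m
  have hG : ∑ r ∈ range (2 * m + 1), (-1 : ℝ) ^ r * (∑ k, x k ^ r) * (∑ k, x k ^ (2 * m - r)) =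
      ∑ j, ∑ k, ∑ r ∈ range (2 * m + 1), (-x j) ^ r * x k ^ (2 * m + 1 - 1 - r) := by
    rw [← sum_range_sum_pow_mul_sum_pow, Nat.add_sub_cancel]
    refine sum_congr rfl fun r _ => ?_
    simp only [neg_pow (x _), mul_sum]
  rw [hG]
  refine sum_pos' (fun j _ => sum_nonneg fun k _ => hodd.geom_sum₂_nonneg _ _)
    ⟨k₀, mem_univ _, sum_pos' (fun k _ => hodd.geom_sum₂_nonneg _ _) ⟨k₀, mem_univ _, ?_⟩⟩
  exact hodd.geom_sum₂_pos (neg_ne_self.2 hk₀)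

theorem gasparyan_pos (m n : ℕ) (hm : 1 ≤ m) (x : Fin n → ℝ) (hx : x ≠ 0) :
    0 < ∑ r ∈ Finset.range (2 * m + 1),
      (-1 : ℝ) ^ r * (∑ k, x k ^ r) * (∑ k, x k ^ (2 * m - r)) :=
  gasparyan_pos_general m n x hx
end

section
/- If m is odd, x_1,...,x_n are all positive, and G_{2m}(x) = (Σ_{i=1}^n x_i^{m-1})(Σ_{i=1}^n x_i^{m+1}), then x_1 = x_2 = ... = x_n. -/
/-!
Expanding the power sums, `G_{2m}(x) = ∑_{i,j} ∑_r (-1)^r x_i^r x_j^{2m-r}`, and the inner sum is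
`(a^{2m+1} + b^{2m+1}) / (a + b)` at `a = x_i`, `b = x_j`. Symmetrizing in `(i, j)` gives
`2 (G_{2m} - S_{m-1} S_{m+1}) = ∑_{i,j} pairDefect m x_i x_j / (x_i + x_j)` with
`pairDefect m a b = (a^m - b^m)(a^{m+1} - b^{m+1}) + (a^{m-1} - b^{m-1})(a^{m+2} - b^{m+2})`.
For positive `x` each summand is nonnegative and vanishes only when `x_i = x_j`.
-/

open Finset

section CommRing

variable {R : Type*} [CommRing R]

theorem alternating_sum_pow_mul_add (a b : R) (m : ℕ) :
    (∑ r ∈ range (2 * m + 1), (-1) ^ r * a ^ r * b ^ (2 * m - r)) * (a + b)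
      = a ^ (2 * m + 1) + b ^ (2 * m + 1) := by
  have hsum : ∑ r ∈ range (2 * m + 1), (-1) ^ r * a ^ r * b ^ (2 * m - r)
      = ∑ r ∈ range (2 * m + 1), a ^ r * (-b) ^ (2 * m + 1 - 1 - r) := by
    refine sum_congr rfl fun r hr => ?_
    have hr : r ≤ 2 * m := Nat.lt_succ_iff.mp (mem_range.mp hr)
    have hsign : (-1 : R) ^ (2 * m - r) = (-1) ^ r :=
      neg_one_pow_congr (by rw [Nat.even_sub hr]; simp)
    rw [Nat.add_sub_cancel, neg_pow b, hsign]
    ring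
  rw [hsum, ← sub_neg_eq_add a b, geom_sum₂_mul, Odd.neg_pow (odd_two_mul_add_one m),
    sub_neg_eq_add]

theorem sum_mul_sum_pow_eq_sum_sum {ι : Type*} [Fintype ι] (x : ι → R) (c : ℕ → R)
    (N M : ℕ) :
    ∑ r ∈ range N, c r * (∑ k, x k ^ r) * (∑ k, x k ^ (M - r))
      = ∑ i, ∑ j, ∑ r ∈ range N, c r * x i ^ r * x j ^ (M - r) := by
  simp only [mul_assoc, Fintype.sum_mul_sum]
  simp only [mul_sum]
  rw [sum_comm]
  exact sum_congr rfl fun _ _ => sum_comm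

def pairDefect (m : ℕ) (a b : R) : R :=
  (a ^ m - b ^ m) * (a ^ (m + 1) - b ^ (m + 1))
    + (a ^ (m - 1) - b ^ (m - 1)) * (a ^ (m + 2) - b ^ (m + 2))

theorem add_mul_alternating_sum_sub_eq_pairDefect {m : ℕ} (hm : 1 ≤ m) (a b : R) :
    (a + b) * ((∑ r ∈ range (2 * m + 1), (-1) ^ r * a ^ r * b ^ (2 * m - r))
      + (∑ r ∈ range (2 * m + 1), (-1) ^ r * b ^ r * a ^ (2 * m - r))
      - a ^ (m - 1) * b ^ (m + 1) - b ^ (m - 1) * a ^ (m + 1)) = pairDefect m a b := by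
  obtain ⟨k, rfl⟩ := Nat.exists_eq_add_of_le' hm
  simp only [pairDefect, Nat.add_sub_cancel]
  linear_combination alternating_sum_pow_mul_add a b (k + 1)
    + alternating_sum_pow_mul_add b a (k + 1)

end CommRing

section Ordered

variable {R : Type*} [CommRing R] [LinearOrder R] [IsStrictOrderedRing R]

theorem pow_sub_pow_mul_pow_sub_pow_nonneg {a b : R} (ha : 0 ≤ a) (hb : 0 ≤ b) (p q : ℕ) :
    0 ≤ (a ^ p - b ^ p) * (a ^ q - b ^ q) := by
  rcases le_total a b with hab | hab
  · exact mul_nonneg_of_nonpos_of_nonpos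
      (sub_nonpos.2 (pow_le_pow_left₀ ha hab p)) (sub_nonpos.2 (pow_le_pow_left₀ ha hab q))
  · exact mul_nonneg
      (sub_nonneg.2 (pow_le_pow_left₀ hb hab p)) (sub_nonneg.2 (pow_le_pow_left₀ hb hab q))

theorem pow_sub_pow_mul_pow_sub_pow_pos {a b : R} (ha : 0 ≤ a) (hb : 0 ≤ b) (hab : a ≠ b)
    {p q : ℕ} (hp : p ≠ 0) (hq : q ≠ 0) :
    0 < (a ^ p - b ^ p) * (a ^ q - b ^ q) := by
  rcases hab.lt_or_gt with hab | hab
  · exact mul_pos_of_neg_of_neg (sub_neg.2 (pow_lt_pow_left₀ hab ha hp))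
      (sub_neg.2 (pow_lt_pow_left₀ hab ha hq))
  · exact mul_pos (sub_pos.2 (pow_lt_pow_left₀ hab hb hp))
      (sub_pos.2 (pow_lt_pow_left₀ hab hb hq))

theorem pairDefect_nonneg (m : ℕ) {a b : R} (ha : 0 ≤ a) (hb : 0 ≤ b) :
    0 ≤ pairDefect m a b :=
  add_nonneg (pow_sub_pow_mul_pow_sub_pow_nonneg ha hb _ _)
    (pow_sub_pow_mul_pow_sub_pow_nonneg ha hb _ _)

theorem eq_of_pairDefect_eq_zero {m : ℕ} (hm : 1 ≤ m) {a b : R} (ha : 0 ≤ a) (hb : 0 ≤ b)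
    (h : pairDefect m a b = 0) : a = b := by
  by_contra hab
  have hpos := pow_sub_pow_mul_pow_sub_pow_pos ha hb hab (p := m) (q := m + 1) (by omega)
    (by omega)
  have := pow_sub_pow_mul_pow_sub_pow_nonneg ha hb (m - 1) (m + 2)
  rw [pairDefect] at h
  linarith

end Ordered

theorem two_mul_sub_eq_sum_pairDefect_div {ι K : Type*} [Fintype ι] [Field K] {m : ℕ}
    (hm : 1 ≤ m) (x : ι → K) (hx : ∀ i j, x i + x j ≠ 0) :
    2 * (∑ r ∈ range (2 * m + 1), (-1) ^ r * (∑ k, x k ^ r) * (∑ k, x k ^ (2 * m - r))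
        - (∑ i, x i ^ (m - 1)) * (∑ i, x i ^ (m + 1)))
      = ∑ i, ∑ j, pairDefect m (x i) (x j) / (x i + x j) := by
  set A : ι → ι → K := fun i j => ∑ r ∈ range (2 * m + 1), (-1) ^ r * x i ^ r * x j ^ (2 * m - r)
  set P : ι → ι → K := fun i j => x i ^ (m - 1) * x j ^ (m + 1)
  have hA : ∑ i, ∑ j, A j i = ∑ i, ∑ j, A i j := sum_comm
  have hP : ∑ i, ∑ j, P j i = ∑ i, ∑ j, P i j := sum_comm
  calc _ = 2 * (∑ i, ∑ j, A i j - ∑ i, ∑ j, P i j) := by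
          rw [sum_mul_sum_pow_eq_sum_sum, Fintype.sum_mul_sum]
    _ = ∑ i, ∑ j, (A i j + A j i - P i j - P j i) := by
          simp only [sum_add_distrib, sum_sub_distrib, hA, hP]
          ring
    _ = _ := sum_congr rfl fun i _ => sum_congr rfl fun j _ =>
          eq_div_of_mul_eq (hx i j) <| by
            rw [mul_comm]
            exact add_mul_alternating_sum_sub_eq_pairDefect hm (x i) (x j)

theorem gasparyan_odd_eq_iff_general (m n : ℕ) (hm : 1 ≤ m)
    (x : Fin n → ℝ) (hx : ∀ i, 0 < x i)
    (heq : ∑ r ∈ Finset.range (2 * m + 1),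
        (-1 : ℝ) ^ r * (∑ k, x k ^ r) * (∑ k, x k ^ (2 * m - r))
      = (∑ i, x i ^ (m - 1)) * (∑ i, x i ^ (m + 1))) :
    ∀ i j, x i = x j := by
  have hpos : ∀ i j, 0 < x i + x j := fun i j => add_pos (hx i) (hx j)
  have hterm : ∀ i j, 0 ≤ pairDefect m (x i) (x j) / (x i + x j) := fun i j =>
    div_nonneg (pairDefect_nonneg m (hx i).le (hx j).le) (hpos i j).le
  have hsum : ∑ i, ∑ j, pairDefect m (x i) (x j) / (x i + x j) = 0 := by
    rw [← two_mul_sub_eq_sum_pairDefect_div hm x fun i j => (hpos i j).ne', heq, sub_self,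
      mul_zero]
  intro i j
  have hrow := (sum_eq_zero_iff_of_nonneg fun i _ => sum_nonneg fun j _ => hterm i j).mp hsum
  have hzero : pairDefect m (x i) (x j) / (x i + x j) = 0 :=
    (sum_eq_zero_iff_of_nonneg fun j _ => hterm i j).mp (hrow i (mem_univ i)) j (mem_univ j)
  exact eq_of_pairDefect_eq_zero hm (hx i).le (hx j).le
    ((div_eq_zero_iff.mp hzero).resolve_right (hpos i j).ne')

theorem gasparyan_odd_eq_iff (m n : ℕ) (hm : 1 ≤ m) (hmo : Odd m) (hn : 2 ≤ n)
    (x : Fin n → ℝ) (hx : ∀ i, 0 < x i)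
    (heq : ∑ r ∈ Finset.range (2 * m + 1),
        (-1 : ℝ) ^ r * (∑ k, x k ^ r) * (∑ k, x k ^ (2 * m - r))
      = (∑ i, x i ^ (m - 1)) * (∑ i, x i ^ (m + 1))) :
    ∀ i j, x i = x j :=
  gasparyan_odd_eq_iff_general m n hm x hx heq
end

section
/- Let a_1,...,a_n be positive reals, and let r, s, u, v be nonnegative reals with s > r, u = 2m − r, v = 2m − s (so u − v = s − r > 0) and s + r ≤ 2m. Then the Gini mean inequality holds: ((Σ_k a_k^{2m−r})/(Σ_k a_k^{2m−s}))^{1/(s−r)} ≥ ((Σ_k a_k^s)/(Σ_k a_k^r))^{1/(s−r)}. -/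
/-!
Expanding both products into double sums and pairing the `(i, j)` term with the `(j, i)` term
reduces the inequality to two points `x, y > 0`. There, after factoring out `x ^ r * y ^ r`, the
difference of the two sides is `(x ^ p - y ^ p) * (x ^ q - y ^ q)` with `p = s - r` and
`q = 2m - r - s`, which is nonnegative because `p, q ≥ 0` make both factors have the sign
of `x - y`.
-/

open Finset

lemma Real.rpow_sub_rpow_mul_rpow_sub_rpow_nonneg {x y p q : ℝ} (hx : 0 ≤ x) (hy : 0 ≤ y)
    (hp : 0 ≤ p) (hq : 0 ≤ q) : 0 ≤ (x ^ p - y ^ p) * (x ^ q - y ^ q) := by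
  rcases le_total x y with hxy | hyx
  · exact mul_nonneg_of_nonpos_of_nonpos (sub_nonpos.2 (Real.rpow_le_rpow hx hxy hp))
      (sub_nonpos.2 (Real.rpow_le_rpow hx hxy hq))
  · exact mul_nonneg (sub_nonneg.2 (Real.rpow_le_rpow hy hyx hp))
      (sub_nonneg.2 (Real.rpow_le_rpow hy hyx hq))

lemma Real.rpow_mul_rpow_add_rpow_mul_rpow_le {x y r s t : ℝ} (hx : 0 < x) (hy : 0 < y)
    (hrs : r ≤ s) (hsum : r + s ≤ t) :
    x ^ s * y ^ (t - s) + y ^ s * x ^ (t - s) ≤ x ^ (t - r) * y ^ r + y ^ (t - r) * x ^ r := by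
  obtain ⟨p, hp, rfl⟩ : ∃ p, 0 ≤ p ∧ s = r + p := ⟨s - r, by linarith, by ring⟩
  obtain ⟨q, hq, rfl⟩ : ∃ q, 0 ≤ q ∧ t = r + p + q + r := ⟨t - r - (r + p), by linarith, by ring⟩
  have key := Real.rpow_sub_rpow_mul_rpow_sub_rpow_nonneg hx.le hy.le hp hq
  have hxy : 0 < x ^ r * y ^ r := by positivity
  rw [show r + p + q + r - (r + p) = r + q by ring, show r + p + q + r - r = r + (p + q) by ring]
  simp only [Real.rpow_add hx, Real.rpow_add hy]
  nlinarith [mul_nonneg hxy.le key]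

lemma Finset.sum_sum_le_sum_sum_of_add_swap_le {ι : Type*} (s : Finset ι) {f g : ι → ι → ℝ}
    (h : ∀ i ∈ s, ∀ j ∈ s, f i j + f j i ≤ g i j + g j i) :
    ∑ i ∈ s, ∑ j ∈ s, f i j ≤ ∑ i ∈ s, ∑ j ∈ s, g i j := by
  have symmetrize (F : ι → ι → ℝ) :
      2 * ∑ i ∈ s, ∑ j ∈ s, F i j = ∑ i ∈ s, ∑ j ∈ s, (F i j + F j i) := by
    simp only [sum_add_distrib, two_mul]
    rw [sum_comm (f := fun j i => F i j)]
  have := sum_le_sum fun i hi => sum_le_sum fun j hj => h i hi j hj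
  linarith [symmetrize f, symmetrize g]

lemma Finset.sum_rpow_mul_sum_rpow_le {ι : Type*} (S : Finset ι) {a : ι → ℝ}
    (ha : ∀ i ∈ S, 0 < a i) {r s t : ℝ} (hrs : r ≤ s) (hsum : r + s ≤ t) :
    (∑ i ∈ S, a i ^ s) * ∑ i ∈ S, a i ^ (t - s) ≤
      (∑ i ∈ S, a i ^ (t - r)) * ∑ i ∈ S, a i ^ r := by
  simp only [sum_mul_sum]
  exact S.sum_sum_le_sum_sum_of_add_swap_le fun i hi j hj =>
    Real.rpow_mul_rpow_add_rpow_mul_rpow_le (ha i hi) (ha j hj) hrs hsum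

lemma Finset.sum_rpow_div_sum_rpow_le {ι : Type*} (S : Finset ι) {a : ι → ℝ}
    (ha : ∀ i ∈ S, 0 < a i) {r s t : ℝ} (hrs : r ≤ s) (hsum : r + s ≤ t) :
    (∑ i ∈ S, a i ^ s) / (∑ i ∈ S, a i ^ r) ≤
      (∑ i ∈ S, a i ^ (t - r)) / (∑ i ∈ S, a i ^ (t - s)) := by
  rcases S.eq_empty_or_nonempty with rfl | hS
  · simp
  have hpos (e : ℝ) : 0 < ∑ i ∈ S, a i ^ e :=
    sum_pos (fun i hi => Real.rpow_pos_of_pos (ha i hi) e) hS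
  rw [div_le_div_iff₀ (hpos r) (hpos (t - s))]
  exact S.sum_rpow_mul_sum_rpow_le ha hrs hsum

theorem gini_mean_inequality_general (m n : ℕ) (a : Fin n → ℝ)
    (ha : ∀ i, 0 < a i) (r s : ℝ) (hrs : r < s)
    (hsum : r + s ≤ 2 * m) :
    ((∑ k, a k ^ s) / (∑ k, a k ^ r)) ^ (1 / (s - r))
      ≤ ((∑ k, a k ^ ((2 * m : ℝ) - r)) / (∑ k, a k ^ ((2 * m : ℝ) - s))) ^ (1 / (s - r)) := by
  have hpos (e : ℝ) : 0 ≤ ∑ k, a k ^ e := sum_nonneg fun k _ => (Real.rpow_pos_of_pos (ha k) e).le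
  refine Real.rpow_le_rpow (div_nonneg (hpos s) (hpos r)) ?_ (one_div_nonneg.2 (by linarith))
  exact univ.sum_rpow_div_sum_rpow_le (fun k _ => ha k) hrs.le hsum

theorem gini_mean_inequality (m n : ℕ) (hm : 1 ≤ m) (a : Fin n → ℝ)
    (ha : ∀ i, 0 < a i) (r s : ℝ) (hr : 0 ≤ r) (hrs : r < s)
    (hsum : r + s ≤ 2 * m) :
    ((∑ k, a k ^ s) / (∑ k, a k ^ r)) ^ (1 / (s - r))
      ≤ ((∑ k, a k ^ ((2 * m : ℝ) - r)) / (∑ k, a k ^ ((2 * m : ℝ) - s))) ^ (1 / (s - r)) :=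
  gini_mean_inequality_general m n a ha r s hrs hsum
end
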